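/- Let G be a finite connected simple graph with a total order on its edges, let B0 be the minimum spanning tree of G with respect to this order, and let T be any spanning tree of G. Then every edge of T that does not belong to B0 is internally passive in T. -/

import Mathlib

attribute [-instance] Sym2.instPartialOrder

open scoped Classical

variable {V : Type} [Fintype V] [LinearOrder V] [LinearOrder (Sym2 V)]

/-- `T` is a spanning tree of the graph `G`, viewed as a set of edges. -/
def IsSpanningTree (G : SimpleGraph V) (T : Set (Sym2 V)) : Prop :=
  T ⊆ G.edgeSet ∧ (SimpleGraph.fromEdgeSet T).IsTree

/-- An edge `e` of the spanning tree `T` is internally passive (w.r.t. the edge order). -/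
def InternallyPassive (G : SimpleGraph V) (T : Set (Sym2 V)) (e : Sym2 V) : Prop :=
  e ∈ T ∧ ∃ f ∈ G.edgeSet, f ∉ T ∧ f < e ∧ IsSpanningTree G (insert f (T \ {e}))

/-- The passivity of a spanning tree: the number of internally passive edges. -/
noncomputable def passivity (G : SimpleGraph V) (T : Set (Sym2 V)) : ℕ :=
  {e : Sym2 V | InternallyPassive G T e}.ncard

/-- `A` is lexicographically smaller than `B` as (sorted lists of) sets of edges:
the minimum of the symmetric difference lies in `A`. -/
def EdgeSetLexLt (A B : Set (Sym2 V)) : Prop :=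
  ∃ e, e ∈ A ∧ e ∉ B ∧ ∀ f, (f ∈ A ∧ f ∉ B) ∨ (f ∈ B ∧ f ∉ A) → f ≠ e → e < f

/-- `B0` is the minimum spanning tree of `G`: the spanning tree whose sorted edge
list is lexicographically smallest. -/
def IsMinSpanningTree (G : SimpleGraph V) (B0 : Set (Sym2 V)) : Prop :=
  IsSpanningTree G B0 ∧ ∀ T, IsSpanningTree G T → T ≠ B0 → EdgeSetLexLt B0 T

/-- `G` has no coloops: every edge lies outside some spanning tree. -/
def NoColoops (G : SimpleGraph V) : Prop :=
  ∀ e ∈ G.edgeSet, ∃ T, IsSpanningTree G T ∧ e ∉ T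

/-- `G` is a triconed graph with distinguished path `v1 - v0 - v2`. -/
def IsTriconed (G : SimpleGraph V) (v0 v1 v2 : V) : Prop :=
  G.Connected ∧ v0 ≠ v1 ∧ v0 ≠ v2 ∧ v1 ≠ v2 ∧ G.Adj v0 v1 ∧ G.Adj v0 v2 ∧
    ∀ v, v ≠ v0 → v ≠ v1 → v ≠ v2 → G.Adj v0 v ∨ G.Adj v1 v ∨ G.Adj v2 v

/-- The vertex order puts `v0 < v1 < v2` first, then the remaining neighbors of `v0`,
then the remaining vertices adjacent to `v1`, then the rest. -/
def VertexOrderSpec (G : SimpleGraph V) (v0 v1 v2 : V) : Prop :=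
  v0 < v1 ∧ v1 < v2 ∧
  (∀ v, v ≠ v0 → v ≠ v1 → v ≠ v2 → v2 < v) ∧
  (∀ u u', u ≠ v0 → u ≠ v1 → u ≠ v2 → u' ≠ v0 → u' ≠ v1 → u' ≠ v2 →
    G.Adj v0 u → ¬G.Adj v0 u' → u < u') ∧
  (∀ u u', u ≠ v0 → u ≠ v1 → u ≠ v2 → u' ≠ v0 → u' ≠ v1 → u' ≠ v2 →
    ¬G.Adj v0 u → ¬G.Adj v0 u' → G.Adj v1 u → ¬G.Adj v1 u' → u < u')

/-- Smaller endpoint of an edge. -/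
def sym2Min (e : Sym2 V) : V :=
  Sym2.lift ⟨fun a b => min a b, fun a b => min_comm a b⟩ e

/-- Larger endpoint of an edge. -/
def sym2Max (e : Sym2 V) : V :=
  Sym2.lift ⟨fun a b => max a b, fun a b => max_comm a b⟩ e

/-- Lexicographic comparison of edges by their endpoints. -/
def Sym2Lex (e f : Sym2 V) : Prop :=
  sym2Min e < sym2Min f ∨ (sym2Min e = sym2Min f ∧ sym2Max e < sym2Max f)

/-- The block of an edge in the specified edge ordering: edges at `v0` first, then edges
joining `v1` to height-2 vertices, then edges joining `v2` to height-2 vertices not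
adjacent to `v1`, then the remaining edges. -/
noncomputable def edgeBlock (G : SimpleGraph V) (v0 v1 v2 : V) (e : Sym2 V) : ℕ :=
  if v0 ∈ e then 0
  else if ∃ x, e = s(v1, x) ∧ ¬G.Adj v0 x then 1
  else if ∃ x, e = s(v2, x) ∧ ¬G.Adj v0 x ∧ ¬G.Adj v1 x then 2
  else 3

/-- The edge order respects the blocks, and is lexicographic within the first three blocks. -/
def EdgeOrderSpec (G : SimpleGraph V) (v0 v1 v2 : V) : Prop :=
  (∀ e ∈ G.edgeSet, ∀ f ∈ G.edgeSet,
      edgeBlock G v0 v1 v2 e < edgeBlock G v0 v1 v2 f → e < f) ∧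
  (∀ e ∈ G.edgeSet, ∀ f ∈ G.edgeSet,
      edgeBlock G v0 v1 v2 e = edgeBlock G v0 v1 v2 f → edgeBlock G v0 v1 v2 e ≤ 2 →
      Sym2Lex e f → e < f)

/-- The edges of `G_red`: edges of `G` not in `B0` and not incident to `v0`. -/
def GredEdges (G : SimpleGraph V) (v0 : V) (B0 : Set (Sym2 V)) : Set (Sym2 V) :=
  {e | e ∈ G.edgeSet ∧ e ∉ B0 ∧ v0 ∉ e}

/-- `u` is a child of `p` in the spanning tree `B0` rooted at `v0`:
`s(u,p) ∈ B0` and removing this edge disconnects `u` from the root. -/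
def IsChildOf (B0 : Set (Sym2 V)) (v0 : V) (u p : V) : Prop :=
  s(u, p) ∈ B0 ∧ ¬(SimpleGraph.fromEdgeSet (B0 \ {s(u, p)})).Reachable u v0

/-- The type of a vertex: `1` if it is `v1` or a child of `v1`, `2` if it is `v2` or a
child of `v2`, and `0` otherwise. -/
noncomputable def vType (B0 : Set (Sym2 V)) (v0 v1 v2 : V) (u : V) : ℕ :=
  if u = v1 ∨ IsChildOf B0 v0 u v1 then 1
  else if u = v2 ∨ IsChildOf B0 v0 u v2 then 2
  else 0

/-- The height of a vertex other than `v0`: `1` if adjacent to `v0`, `2` otherwise. -/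
noncomputable def vHeight (G : SimpleGraph V) (v0 : V) (u : V) : ℕ :=
  if G.Adj v0 u then 1 else 2

/-- `(E, m)` is a marked spanning forest of `G_red`: an acyclic set of `G_red`-edges
with marks on vertices, each vertex carrying at most one mark except type-2 vertices
which may carry two. -/
def IsMarkedForest (G : SimpleGraph V) (v0 v1 v2 : V) (B0 : Set (Sym2 V))
    (E : Set (Sym2 V)) (m : V → ℕ) : Prop :=
  E ⊆ GredEdges G v0 B0 ∧ (SimpleGraph.fromEdgeSet E).IsAcyclic ∧ m v0 = 0 ∧
  ∀ v, m v ≤ if vType B0 v0 v1 v2 v = 2 then 2 else 1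

/-- Total number of marks in the component of `u`. -/
noncomputable def compMarks (E : Set (Sym2 V)) (m : V → ℕ) (u : V) : ℕ :=
  ∑ x : V, if (SimpleGraph.fromEdgeSet E).Reachable u x then m x else 0

/-- Number of marks of type `t` in the component of `u` (the extra mark of a doubly
marked vertex counting as a mark of type `0`). -/
noncomputable def markTypeCount (B0 : Set (Sym2 V)) (v0 v1 v2 : V)
    (E : Set (Sym2 V)) (m : V → ℕ) (u : V) (t : ℕ) : ℕ :=
  ∑ x : V, if (SimpleGraph.fromEdgeSet E).Reachable u x then
      ((if 1 ≤ m x ∧ vType B0 v0 v1 v2 x = t then 1 else 0) +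
        (if m x = 2 ∧ t = 0 then 1 else 0))
    else 0

/-- The component of `u` in `(E, m)` is correctly marked. -/
def CorrectlyMarkedComp (B0 : Set (Sym2 V)) (v0 v1 v2 : V)
    (E : Set (Sym2 V)) (m : V → ℕ) (u : V) : Prop :=
  1 ≤ compMarks E m u ∧
  ((SimpleGraph.fromEdgeSet E).Reachable u v1 → 1 ≤ m v1) ∧
  ((SimpleGraph.fromEdgeSet E).Reachable u v2 → 1 ≤ m v2) ∧
  (∀ t, markTypeCount B0 v0 v1 v2 E m u t ≤ 1) ∧
  (∀ x, (SimpleGraph.fromEdgeSet E).Reachable u x → m x = 2 →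
    ∃ x', (SimpleGraph.fromEdgeSet E).Reachable u x' ∧ x' ≠ x ∧ 1 ≤ m x')

/-- The multiplicity of the blueprint edge `{a, b}`: the number of 2-components whose
marks have types `a` and `b`, plus (for `{a,b} ∈ {{0,1},{0,2}}`) the number of
3-components. -/
noncomputable def bpMult (B0 : Set (Sym2 V)) (v0 v1 v2 : V)
    (E : Set (Sym2 V)) (m : V → ℕ) (a b : ℕ) : ℕ :=
  {c : (SimpleGraph.fromEdgeSet E).ConnectedComponent |
    ∃ u, u ≠ v0 ∧ (SimpleGraph.fromEdgeSet E).connectedComponentMk u = c ∧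
      ((compMarks E m u = 2 ∧ a ≠ b ∧
          1 ≤ markTypeCount B0 v0 v1 v2 E m u a ∧ 1 ≤ markTypeCount B0 v0 v1 v2 E m u b) ∨
        (compMarks E m u = 3 ∧
          (({a, b} : Set ℕ) = {0, 1} ∨ ({a, b} : Set ℕ) = {0, 2})))}.ncard

/-- The blueprint (a multigraph on `{0,1,2}`) is acyclic. -/
def bpAcyclic (B0 : Set (Sym2 V)) (v0 v1 v2 : V) (E : Set (Sym2 V)) (m : V → ℕ) : Prop :=
  bpMult B0 v0 v1 v2 E m 0 1 ≤ 1 ∧ bpMult B0 v0 v1 v2 E m 0 2 ≤ 1 ∧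
  bpMult B0 v0 v1 v2 E m 1 2 ≤ 1 ∧
  ¬(1 ≤ bpMult B0 v0 v1 v2 E m 0 1 ∧ 1 ≤ bpMult B0 v0 v1 v2 E m 0 2 ∧
      1 ≤ bpMult B0 v0 v1 v2 E m 1 2)

/-- The vertices `a` and `b` of the blueprint lie in the same connected component. -/
def bpConnected (B0 : Set (Sym2 V)) (v0 v1 v2 : V) (E : Set (Sym2 V)) (m : V → ℕ)
    (a b : ℕ) : Prop :=
  a = b ∨ 1 ≤ bpMult B0 v0 v1 v2 E m a b ∨
    ∃ c, c ∈ ({0, 1, 2} : Set ℕ) ∧ c ≠ a ∧ c ≠ b ∧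
      1 ≤ bpMult B0 v0 v1 v2 E m a c ∧ 1 ≤ bpMult B0 v0 v1 v2 E m c b

/-- `(E, m)` is a trirooted forest of `G_red`. -/
def IsTriRootedForest (G : SimpleGraph V) (v0 v1 v2 : V) (B0 : Set (Sym2 V))
    (E : Set (Sym2 V)) (m : V → ℕ) : Prop :=
  IsMarkedForest G v0 v1 v2 B0 E m ∧
  (∀ u, u ≠ v0 → CorrectlyMarkedComp B0 v0 v1 v2 E m u) ∧
  bpAcyclic B0 v0 v1 v2 E m

/-- `v` receives the extra mark coming from the edge `02`: `02 ∈ B`, there is a path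
from `v2` to `v1` in `B` avoiding `02`, and `v` is the endpoint closer to `v2` of the
first edge of this path not in `B0`. -/
def DoublyMarkedAt (B0 B : Set (Sym2 V)) (v0 v1 v2 : V) (v : V) : Prop :=
  s(v0, v2) ∈ B ∧
  ∃ p : (SimpleGraph.fromEdgeSet B).Walk v2 v1, p.IsPath ∧ s(v0, v2) ∉ p.edges ∧
    ∃ i : ℕ, (∀ j < i, ∀ e, p.edges[j]? = some e → e ∈ B0) ∧
      (∃ e, p.edges[i]? = some e ∧ e ∉ B0) ∧ v = p.getVert i

/-- `(E, m)` is the marked spanning forest `φ₁(B)` associated to the spanning tree `B`. -/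
def IsPhi1 (G : SimpleGraph V) (v0 v1 v2 : V) (B0 B : Set (Sym2 V))
    (E : Set (Sym2 V)) (m : V → ℕ) : Prop :=
  E = B ∩ GredEdges G v0 B0 ∧
  (∀ v, m v ≤ 2) ∧
  (∀ v, 1 ≤ m v ↔ (v = v1 ∨ v = v2 ∨ ∃ p, IsChildOf B0 v0 v p ∧ s(v, p) ∈ B)) ∧
  (∀ v, m v = 2 ↔ DoublyMarkedAt B0 B v0 v1 v2 v)

/-- `(S, E)` is a (sub)tree of `G_red` with vertex set `S` and edge set `E`. -/
def IsSubTree (G : SimpleGraph V) (v0 : V) (B0 : Set (Sym2 V))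
    (S : Set V) (E : Set (Sym2 V)) : Prop :=
  S.Nonempty ∧ v0 ∉ S ∧ E ⊆ GredEdges G v0 B0 ∧
  (∀ e ∈ E, ∀ x ∈ e, x ∈ S) ∧
  (∀ u ∈ S, ∀ x ∈ S, (SimpleGraph.fromEdgeSet E).Reachable u x) ∧
  (SimpleGraph.fromEdgeSet E).IsAcyclic

/-- Total number of marks of the marked tree `(S, m)`. -/
noncomputable def treeTotalMarks (S : Set V) (m : V → ℕ) : ℕ :=
  ∑ x : V, if x ∈ S then m x else 0

/-- Number of marks of type `t` of the marked tree `(S, m)`. -/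
noncomputable def treeMarkTypeCount (B0 : Set (Sym2 V)) (v0 v1 v2 : V)
    (S : Set V) (m : V → ℕ) (t : ℕ) : ℕ :=
  ∑ x : V, if x ∈ S then
      ((if 1 ≤ m x ∧ vType B0 v0 v1 v2 x = t then 1 else 0) +
        (if m x = 2 ∧ t = 0 then 1 else 0))
    else 0

/-- `(S, E, m)` is a correctly marked tree of `G_red`. -/
def IsCorrectlyMarkedTree (G : SimpleGraph V) (v0 v1 v2 : V) (B0 : Set (Sym2 V))
    (S : Set V) (E : Set (Sym2 V)) (m : V → ℕ) : Prop :=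
  IsSubTree G v0 B0 S E ∧
  (∀ v, v ∉ S → m v = 0) ∧
  (∀ v, m v ≤ if vType B0 v0 v1 v2 v = 2 then 2 else 1) ∧
  1 ≤ treeTotalMarks S m ∧
  (v1 ∈ S → 1 ≤ m v1) ∧ (v2 ∈ S → 1 ≤ m v2) ∧
  (∀ t, treeMarkTypeCount B0 v0 v1 v2 S m t ≤ 1) ∧
  (∀ x ∈ S, m x = 2 → ∃ x' ∈ S, x' ≠ x ∧ 1 ≤ m x')

/-- Number of effective marks: marks at normal vertices together with the extra marks
of doubly marked vertices. -/
noncomputable def effMarks (v1 v2 : V) (S : Set V) (m : V → ℕ) : ℕ :=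
  treeTotalMarks S m -
    ((if v1 ∈ S ∧ 1 ≤ m v1 then 1 else 0) + (if v2 ∈ S ∧ 1 ≤ m v2 then 1 else 0))

/-- Number of passive effective marks: an effective mark is passive unless it is the
unique mark of the tree and lies at the smallest vertex of the tree. -/
noncomputable def passiveEffMarks (v1 v2 : V) (S : Set V) (m : V → ℕ) : ℕ :=
  effMarks v1 v2 S m -
    (if ∃ v ∈ S, v ≠ v1 ∧ v ≠ v2 ∧ 1 ≤ m v ∧ treeTotalMarks S m = 1 ∧ ∀ u ∈ S, v ≤ u
      then 1 else 0)

/-- Total excess `Σ_{e ∈ E} (w e - 1)` of the edge weights. -/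
noncomputable def excessWeightSum (E : Set (Sym2 V)) (w : Sym2 V → ℕ) : ℕ :=
  ∑ e : Sym2 V, if e ∈ E then w e - 1 else 0

/-- Excess weight of the weighted tree `(S, E, w)`. -/
noncomputable def excessWeight (v1 v2 : V) (S : Set V) (E : Set (Sym2 V))
    (w : Sym2 V → ℕ) : ℕ :=
  (if v1 ∈ S then 1 else 0) + (if v2 ∈ S then 1 else 0) + excessWeightSum E w

/-- Total weight `Σ_{e ∈ E} w e`, i.e. the total degree of the associated monomial. -/
noncomputable def totalWeight (E : Set (Sym2 V)) (w : Sym2 V → ℕ) : ℕ :=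
  ∑ e : Sym2 V, if e ∈ E then w e else 0

/-- All pairs of weighted objects of the weighted tree `(S, E, w)` are compatible:
the endpoints of the smallest path containing any two weighted objects have
different types. -/
def WeightedObjectsCompatible (B0 : Set (Sym2 V)) (v0 v1 v2 : V)
    (S : Set V) (E : Set (Sym2 V)) (w : Sym2 V → ℕ) : Prop :=
  (∀ vsp ∈ ({v1, v2} : Set V), vsp ∈ S → ∀ x y, s(x, y) ∈ E → 2 ≤ w s(x, y) →
      (SimpleGraph.fromEdgeSet (E \ {s(x, y)})).Reachable vsp x →
      vType B0 v0 v1 v2 vsp ≠ vType B0 v0 v1 v2 y) ∧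
  (∀ x y p q, s(x, y) ∈ E → s(p, q) ∈ E → s(x, y) ≠ s(p, q) →
      2 ≤ w s(x, y) → 2 ≤ w s(p, q) →
      (SimpleGraph.fromEdgeSet (E \ {s(x, y)})).Reachable x p →
      (SimpleGraph.fromEdgeSet (E \ {s(p, q)})).Reachable p x →
      vType B0 v0 v1 v2 y ≠ vType B0 v0 v1 v2 q) ∧
  (∀ x y, s(x, y) ∈ E → 3 ≤ w s(x, y) → vType B0 v0 v1 v2 x ≠ vType B0 v0 v1 v2 y)

/-- `(S, E, w)` is a correctly weighted tree of `G_red`. -/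
def IsCorrectlyWeightedTree (G : SimpleGraph V) (v0 v1 v2 : V) (B0 : Set (Sym2 V))
    (S : Set V) (E : Set (Sym2 V)) (w : Sym2 V → ℕ) : Prop :=
  IsSubTree G v0 B0 S E ∧
  (∀ e ∈ E, 1 ≤ w e) ∧
  excessWeight v1 v2 S E w ≤ 3 ∧
  (2 ≤ excessWeight v1 v2 S E w → WeightedObjectsCompatible B0 v0 v1 v2 S E w) ∧
  (∀ x y, s(x, y) ∈ E → w s(x, y) ≤ vHeight G v0 x + vHeight G v0 y) ∧
  (∀ x y, s(x, y) ∈ E → w s(x, y) = vHeight G v0 x + vHeight G v0 y →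
    ∀ e ∈ E, e ≠ s(x, y) → w e ≤ 2)

/-- `s(v, x)` is the edge incident to `v` on the unique path from `v` to `u` in the
tree with edge set `E`. -/
def PathFirstEdge (E : Set (Sym2 V)) (v u : V) (x : V) : Prop :=
  s(v, x) ∈ E ∧ ¬(SimpleGraph.fromEdgeSet (E \ {s(v, x)})).Reachable v u

/-- `z` lies on the (unique) path between `a` and `b` in the forest with edge set `E`. -/
def OnPathBetween (E : Set (Sym2 V)) (a b z : V) : Prop :=
  ∃ p : (SimpleGraph.fromEdgeSet E).Walk a b, p.IsPath ∧ z ∈ p.support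

/-- `s(x, y)` (with `x` nearer `z`, `y` nearer `v`) is the first edge along the path
from the sandwiched mark `z` towards `v` whose endpoint closer to `v` has type
different from that of `wv` and whose endpoint closer to `wv` has type different
from that of `v`. -/
def SandwichEdge (B0 : Set (Sym2 V)) (v0 v1 v2 : V) (E : Set (Sym2 V))
    (z v wv : V) (x y : V) : Prop :=
  s(x, y) ∈ E ∧
  ¬(SimpleGraph.fromEdgeSet (E \ {s(x, y)})).Reachable z v ∧
  (SimpleGraph.fromEdgeSet (E \ {s(x, y)})).Reachable z x ∧
  vType B0 v0 v1 v2 y ≠ vType B0 v0 v1 v2 wv ∧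
  vType B0 v0 v1 v2 x ≠ vType B0 v0 v1 v2 v ∧
  ∀ x' y', s(x', y') ∈ E →
    ¬(SimpleGraph.fromEdgeSet (E \ {s(x', y')})).Reachable z x →
    (SimpleGraph.fromEdgeSet (E \ {s(x', y')})).Reachable z x' →
    (vType B0 v0 v1 v2 y' = vType B0 v0 v1 v2 wv ∨ vType B0 v0 v1 v2 x' = vType B0 v0 v1 v2 v)

/-- `w` is the weighting `φ₂(S, E, m)` produced by the empowerment algorithm applied
to the correctly marked tree `(S, E, m)` (only the weights of edges of `E` are
constrained). -/
def IsPhi2 (B0 : Set (Sym2 V)) (v0 v1 v2 : V)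
    (S : Set V) (E : Set (Sym2 V)) (m : V → ℕ) (w : Sym2 V → ℕ) : Prop :=
  (treeTotalMarks S m = 1 →
    ∃ v ∈ S, m v = 1 ∧
      (((∀ u ∈ S, v ≤ u) ∧ ∀ e ∈ E, w e = 1) ∨
        (¬(∀ u ∈ S, v ≤ u) ∧ ∃ u0 ∈ S, (∀ u ∈ S, u0 ≤ u) ∧
          ∃ x, PathFirstEdge E v u0 x ∧ ∀ e ∈ E, w e = if e = s(v, x) then 2 else 1))) ∧
  (treeTotalMarks S m = 2 →
    ∃ v ∈ S, ∃ u ∈ S, v ≠ u ∧ m v = 1 ∧ m u = 1 ∧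
      ∃ x y, PathFirstEdge E v u x ∧ PathFirstEdge E u v y ∧
        ∀ e ∈ E, w e = 1 + (if v ≠ v1 ∧ v ≠ v2 ∧ e = s(v, x) then 1 else 0)
                        + (if u ≠ v1 ∧ u ≠ v2 ∧ e = s(u, y) then 1 else 0)) ∧
  (treeTotalMarks S m = 3 →
    ((∃ a ∈ S, ∃ b ∈ S, ∃ c ∈ S, a ≠ b ∧ a ≠ c ∧ b ≠ c ∧ m a = 1 ∧ m b = 1 ∧ m c = 1 ∧
        ¬OnPathBetween E b c a ∧ ¬OnPathBetween E a c b ∧ ¬OnPathBetween E a b c ∧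
        ∃ xa xb xc, PathFirstEdge E a b xa ∧ PathFirstEdge E b a xb ∧
          PathFirstEdge E c a xc ∧
          ∀ e ∈ E, w e = 1 + (if a ≠ v1 ∧ a ≠ v2 ∧ e = s(a, xa) then 1 else 0)
                          + (if b ≠ v1 ∧ b ≠ v2 ∧ e = s(b, xb) then 1 else 0)
                          + (if c ≠ v1 ∧ c ≠ v2 ∧ e = s(c, xc) then 1 else 0)) ∨
      (∃ v ∈ S, ∃ wv ∈ S, ∃ z ∈ S, v ≠ wv ∧ v ≠ z ∧ 1 ≤ m v ∧ 1 ≤ m wv ∧ 1 ≤ m z ∧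
        OnPathBetween E v wv z ∧ (z = wv → m wv = 2) ∧
        (z ≠ wv → m v = 1 ∧ m wv = 1 ∧ m z = 1) ∧
        vType B0 v0 v1 v2 v < vType B0 v0 v1 v2 wv ∧
        ∃ xv xw xz yz, PathFirstEdge E v wv xv ∧ PathFirstEdge E wv v xw ∧
          SandwichEdge B0 v0 v1 v2 E z v wv xz yz ∧
          ∀ e ∈ E, w e = 1 + (if v ≠ v1 ∧ v ≠ v2 ∧ e = s(v, xv) then 1 else 0)
                          + (if wv ≠ v1 ∧ wv ≠ v2 ∧ e = s(wv, xw) then 1 else 0)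
                          + (if e = s(xz, yz) then 1 else 0))))

/-- The vertex set of the component of `u` in the forest with edge set `E`. -/
def compVerts (E : Set (Sym2 V)) (u : V) : Set V :=
  {x | (SimpleGraph.fromEdgeSet E).Reachable u x}

/-- The edge set of the component of `u` in the forest with edge set `E`. -/
def compEdges (E : Set (Sym2 V)) (u : V) : Set (Sym2 V) :=
  {e | e ∈ E ∧ ∀ x ∈ e, (SimpleGraph.fromEdgeSet E).Reachable u x}

/-- `w` is the weighting `φ₂(E, m)` of the marked forest `(E, m)`, obtained by applying
the empowerment algorithm to every component. -/
def IsPhi2Forest (B0 : Set (Sym2 V)) (v0 v1 v2 : V)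
    (E : Set (Sym2 V)) (m : V → ℕ) (w : Sym2 V → ℕ) : Prop :=
  ∀ u, u ≠ v0 → IsPhi2 B0 v0 v1 v2 (compVerts E u) (compEdges E u)
      (fun v => if v ∈ compVerts E u then m v else 0) w

/-- `(h_0, …, h_r)` is a pure O-sequence. -/
def IsPureOSeq (r : ℕ) (h : ℕ → ℕ) : Prop :=
  ∃ (σ : Type) (_ : Finite σ) (X : Set (σ →₀ ℕ)),
    X.Finite ∧
    (∀ μ ∈ X, ∀ ν : σ →₀ ℕ, ν ≤ μ → ν ∈ X) ∧
    (∀ μ ∈ X, ∀ ν ∈ X, (∀ ρ ∈ X, μ ≤ ρ → ρ = μ) → (∀ ρ ∈ X, ν ≤ ρ → ρ = ν) →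
        μ.sum (fun _ n => n) = ν.sum (fun _ n => n)) ∧
    (∀ i, {μ ∈ X | μ.sum (fun _ n => n) = i}.ncard = if i ≤ r then h i else 0)

section MyHelpers
set_option linter.unusedSectionVars false
open SimpleGraph
lemma myFromEdgeSet_sdiff (T : Set (Sym2 V)) (e : Sym2 V) :
    SimpleGraph.fromEdgeSet T \ SimpleGraph.fromEdgeSet {e}
      = SimpleGraph.fromEdgeSet (T \ {e}) := by
  ext a b
  simp only [sdiff_adj, fromEdgeSet_adj, Set.mem_diff, Set.mem_singleton_iff]
  tauto

lemma myIsAcyclic_mono {G H : SimpleGraph V} (h : H ≤ G) (hG : G.IsAcyclic) :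
    H.IsAcyclic := fun _ c hc => hG (c.mapLe h) (hc.mapLe h)

lemma myTree_bridge {T : Set (Sym2 V)} (hT : (SimpleGraph.fromEdgeSet T).IsAcyclic)
    {a b : V} (hab : (SimpleGraph.fromEdgeSet T).Adj a b) :
    ¬(SimpleGraph.fromEdgeSet (T \ {s(a,b)})).Reachable a b := by
  have h := (isAcyclic_iff_forall_adj_isBridge.mp hT) hab
  rw [isBridge_iff, deleteEdges, myFromEdgeSet_sdiff] at h
  exact h

/-- splitting reachability at a removed edge -/
lemma myReach_split (F : Set (Sym2 V)) (a b : V) {v u : V}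
    (h : (SimpleGraph.fromEdgeSet F).Reachable v u) :
    (SimpleGraph.fromEdgeSet (F \ {s(a,b)})).Reachable v u ∨
      (((SimpleGraph.fromEdgeSet (F \ {s(a,b)})).Reachable v a ∨
        (SimpleGraph.fromEdgeSet (F \ {s(a,b)})).Reachable v b) ∧
       ((SimpleGraph.fromEdgeSet (F \ {s(a,b)})).Reachable u a ∨
        (SimpleGraph.fromEdgeSet (F \ {s(a,b)})).Reachable u b)) := by
  set H := SimpleGraph.fromEdgeSet (F \ {s(a,b)}) with hH
  obtain ⟨p⟩ := h
  induction p with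
  | nil => left; rfl
  | @cons v x u hadj p ih =>
    by_cases hvx : s(v, x) = s(a, b)
    · rw [Sym2.eq_iff] at hvx
      have hv : H.Reachable v a ∨ H.Reachable v b := by
        rcases hvx with ⟨rfl, rfl⟩ | ⟨rfl, rfl⟩
        · left; rfl
        · right; rfl
      have hx : H.Reachable x a ∨ H.Reachable x b := by
        rcases hvx with ⟨rfl, rfl⟩ | ⟨rfl, rfl⟩
        · right; rfl
        · left; rfl
      right
      refine ⟨hv, ?_⟩
      rcases ih with h1 | ⟨_, h2⟩
      · rcases hx with h | h
        · exact Or.inl (h1.symm.trans h)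
        · exact Or.inr (h1.symm.trans h)
      · exact h2
    · have hadj' : H.Adj v x := by
        rw [hH, fromEdgeSet_adj]
        exact ⟨⟨((fromEdgeSet_adj _).mp hadj).1, hvx⟩, hadj.ne⟩
      rcases ih with h1 | ⟨h2, h3⟩
      · exact Or.inl (hadj'.reachable.trans h1)
      · right
        refine ⟨?_, h3⟩
        rcases h2 with h | h
        · exact Or.inl (hadj'.reachable.trans h)
        · exact Or.inr (hadj'.reachable.trans h)

/-- crossing lemma: a path between vertices in different `H`-components contains an
edge crossing the `H`-cut, and removing that edge keeps the two path segments. -/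
lemma myCrossing (Γ H : SimpleGraph V) :
    ∀ {a b : V} (p : Γ.Walk a b), p.IsPath → ¬H.Reachable a b →
    ∃ x y, s(x,y) ∈ p.edges ∧ H.Reachable a x ∧ ¬H.Reachable a y ∧
      (Γ \ SimpleGraph.fromEdgeSet {s(x,y)}).Reachable a x ∧
      (Γ \ SimpleGraph.fromEdgeSet {s(x,y)}).Reachable y b := by
  intro a b p
  induction p with
  | nil => intro _ hab; exact absurd (SimpleGraph.Reachable.refl _) hab
  | @cons u v w hadj q ih =>
    intro hp hab
    have hq : q.IsPath := (SimpleGraph.Walk.cons_isPath_iff hadj q).mp hp |>.1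
    have hu : u ∉ q.support := ((SimpleGraph.Walk.cons_isPath_iff hadj q).mp hp).2
    by_cases hr : H.Reachable u v
    · have hvb : ¬H.Reachable v w := fun h => hab (hr.trans h)
      obtain ⟨x, y, hxy, hvx, hvy, r1, r2⟩ := ih hq hvb
      refine ⟨x, y, ?_, hr.trans hvx, fun h => hvy (hr.symm.trans h), ?_, r2⟩
      · simp [SimpleGraph.Walk.edges_cons, hxy]
      · have hne : s(u, v) ≠ s(x, y) := by
          intro h
          exact hu (q.fst_mem_support_of_mem_edges (h ▸ hxy))
        have : (Γ \ SimpleGraph.fromEdgeSet {s(x,y)}).Adj u v := by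
          rw [sdiff_adj]
          refine ⟨hadj, ?_⟩
          rw [fromEdgeSet_adj]
          rintro ⟨h1, -⟩
          exact hne (Set.mem_singleton_iff.mp h1)
        exact this.reachable.trans r1
    · refine ⟨u, v, by simp [SimpleGraph.Walk.edges_cons], SimpleGraph.Reachable.refl _, hr,
        SimpleGraph.Reachable.refl _, ?_⟩
      have hnot : s(u, v) ∉ q.edges := fun h => hu (q.fst_mem_support_of_mem_edges h)
      refine SimpleGraph.Reachable.mono le_rfl ?_
      refine ⟨q.transfer (Γ \ SimpleGraph.fromEdgeSet {s(u,v)}) ?_⟩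
      intro e he
      rw [SimpleGraph.edgeSet_sdiff, edgeSet_fromEdgeSet]
      refine ⟨q.edges_subset_edgeSet he, ?_⟩
      simp only [Set.mem_diff, Set.mem_singleton_iff, Set.mem_setOf_eq, not_and, not_not]
      intro h
      exact absurd (h ▸ he) hnot

/-- adding an edge between two distinct components of an acyclic graph keeps it acyclic -/
lemma myAcyclic_insert {E : Set (Sym2 V)} (hac : (SimpleGraph.fromEdgeSet E).IsAcyclic)
    {c d : V} (hcd : ¬(SimpleGraph.fromEdgeSet E).Reachable c d) (hf : s(c,d) ∉ E) :
    (SimpleGraph.fromEdgeSet (insert s(c,d) E)).IsAcyclic := by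
  rw [isAcyclic_iff_forall_adj_isBridge]
  intro x y hxy
  rw [isBridge_iff, deleteEdges, myFromEdgeSet_sdiff]
  refine id ?_
  by_cases hcase : s(x, y) = s(c, d)
  · have hset : (insert s(c,d) E) \ {s(x,y)} = E \ {s(x,y)} := by
      rw [hcase, Set.insert_diff_of_mem _ (Set.mem_singleton _)]
    rw [hset]
    intro hreach
    have hxyE : ¬(SimpleGraph.fromEdgeSet E).Reachable x y := by
      rw [Sym2.eq_iff] at hcase
      rcases hcase with ⟨rfl, rfl⟩ | ⟨rfl, rfl⟩
      · exact hcd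
      · exact fun h => hcd h.symm
    exact hxyE (hreach.mono (fromEdgeSet_mono Set.diff_subset))
  · have hmemE : s(x, y) ∈ E := by
      have := ((fromEdgeSet_adj _).mp hxy).1
      rcases Set.mem_insert_iff.mp this with h | h
      · exact absurd h hcase
      · exact h
    have hbridge : ¬(SimpleGraph.fromEdgeSet (E \ {s(x,y)})).Reachable x y :=
      myTree_bridge hac ((fromEdgeSet_adj _).mpr ⟨hmemE, hxy.ne⟩)
    have hset : (insert s(c,d) E) \ {s(x,y)} = insert s(c,d) (E \ {s(x,y)}) := by
      rw [Set.insert_diff_of_notMem]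
      simp only [Set.mem_singleton_iff]
      exact fun h => hcase h.symm
    rw [hset]
    intro hreach
    have hsplit := myReach_split (insert s(c,d) (E \ {s(x,y)})) c d hreach
    have hdel : (insert s(c,d) (E \ {s(x,y)})) \ {s(c,d)} = E \ {s(x,y)} := by
      ext g
      simp only [Set.mem_diff, Set.mem_insert_iff, Set.mem_singleton_iff]
      constructor
      · rintro ⟨h | ⟨h1, h2⟩, hne⟩
        · exact absurd h hne
        · exact ⟨h1, h2⟩
      · rintro ⟨h1, h2⟩
        exact ⟨Or.inr ⟨h1, h2⟩, fun hh => hf (hh ▸ h1)⟩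
    rw [hdel] at hsplit
    set Γm := SimpleGraph.fromEdgeSet (E \ {s(x,y)}) with hΓm
    have hmle : Γm ≤ SimpleGraph.fromEdgeSet E := fromEdgeSet_mono Set.diff_subset
    have hadjE : (SimpleGraph.fromEdgeSet E).Reachable x y :=
      ((fromEdgeSet_adj _).mpr ⟨hmemE, hxy.ne⟩).reachable
    rcases hsplit with h | ⟨hx, hy⟩
    · exact hbridge h
    · rcases hx with hxc | hxd <;> rcases hy with hyc | hyd
      · exact hbridge (hxc.trans hyc.symm)
      · exact hcd (((hxc.symm.mono hmle).trans hadjE).trans (hyd.mono hmle))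
      · exact hcd (((hyc.symm.mono hmle).trans hadjE.symm).trans (hxd.mono hmle))
      · exact hbridge (hxd.trans hyd.symm)

/-- swapping an edge of a tree for an edge crossing the cut gives a tree -/
lemma mySwapTree {T : Set (Sym2 V)} (hT : (SimpleGraph.fromEdgeSet T).IsTree)
    {a b c d : V} (he : s(a,b) ∈ T) (hcd : c ≠ d)
    (hfT : s(c,d) ∉ T \ {s(a,b)})
    (hsep : ¬(SimpleGraph.fromEdgeSet (T \ {s(a,b)})).Reachable c d) :
    (SimpleGraph.fromEdgeSet (insert s(c,d) (T \ {s(a,b)}))).IsTree := by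
  set H := SimpleGraph.fromEdgeSet (T \ {s(a,b)}) with hH
  set Γ' := SimpleGraph.fromEdgeSet (insert s(c,d) (T \ {s(a,b)})) with hΓ'
  have hHac : H.IsAcyclic :=
    myIsAcyclic_mono (SimpleGraph.fromEdgeSet_mono Set.diff_subset) hT.IsAcyclic
  have hac : Γ'.IsAcyclic := myAcyclic_insert hHac hsep hfT
  have hHle : H ≤ Γ' := SimpleGraph.fromEdgeSet_mono (Set.subset_insert _ _)
  have hadj' : Γ'.Adj c d := (fromEdgeSet_adj _).mpr ⟨Set.mem_insert _ _, hcd⟩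
  have hS1 : ∀ v, H.Reachable v a ∨ H.Reachable v b := by
    intro v
    rcases myReach_split T a b (hT.isConnected.preconnected v a) with h | ⟨h, -⟩
    · exact Or.inl h
    · exact h
  have hab' : Γ'.Reachable a b := by
    rcases hS1 c with hc | hc <;> rcases hS1 d with hd | hd
    · exact absurd (hc.trans hd.symm) hsep
    · exact (hc.mono hHle).symm.trans (hadj'.reachable.trans (hd.mono hHle))
    · exact (hd.mono hHle).symm.trans (hadj'.symm.reachable.trans (hc.mono hHle))
    · exact absurd (hc.trans hd.symm) hsep
  have hva : ∀ v, Γ'.Reachable v a := by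
    intro v
    rcases hS1 v with h | h
    · exact h.mono hHle
    · exact (h.mono hHle).trans hab'.symm
  refine ⟨?_, hac⟩
  rw [connected_iff]
  exact ⟨fun v u => (hva v).trans (hva u).symm, hT.isConnected.nonempty⟩

end MyHelpers

section Statements

variable (G : SimpleGraph V) (v0 v1 v2 : V) (B0 : Set (Sym2 V))

theorem statement4
    (hconn : G.Connected) (hB0 : IsMinSpanningTree G B0)
    (T : Set (Sym2 V)) (hT : IsSpanningTree G T) :
    ∀ e ∈ T, e ∉ B0 → InternallyPassive G T e := by
  intro e
  induction e using Sym2.ind with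
  | _ a b =>
  intro heT heB0
  obtain ⟨hTsub, hTtree⟩ := hT
  have heG : s(a, b) ∈ G.edgeSet := hTsub heT
  have hane : a ≠ b := fun h => G.not_isDiag_of_mem_edgeSet heG (Sym2.mk_isDiag_iff.mpr h)
  set H := SimpleGraph.fromEdgeSet (T \ {s(a, b)}) with hHdef
  have hsepab : ¬H.Reachable a b :=
    myTree_bridge hTtree.IsAcyclic ((SimpleGraph.fromEdgeSet_adj _).mpr ⟨heT, hane⟩)
  set C : Set (Sym2 V) :=
    {g | g ∈ G.edgeSet ∧ ∃ p q, g = s(p, q) ∧ H.Reachable a p ∧ ¬H.Reachable a q} with hCdef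
  have heC : s(a, b) ∈ C := ⟨heG, a, b, rfl, SimpleGraph.Reachable.refl _, hsepab⟩
  obtain ⟨f, hfC, hfmin⟩ := Set.exists_min_image C id (Set.toFinite C) ⟨_, heC⟩
  by_cases hfe : f = s(a, b)
  · -- e is the minimum crossing edge: contradict minimality of B0
    exfalso
    obtain ⟨⟨hB0sub, hB0tree⟩, hB0min⟩ := hB0
    obtain ⟨wk⟩ := hB0tree.isConnected.preconnected a b
    obtain ⟨x, y, hxyE, hax, hnay, r1, r2⟩ :=
      myCrossing (SimpleGraph.fromEdgeSet B0) H wk.toPath.val wk.toPath.property hsepab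
    rw [myFromEdgeSet_sdiff] at r1 r2
    have hgB0 : s(x, y) ∈ B0 := by
      have := wk.toPath.val.edges_subset_edgeSet hxyE
      rw [SimpleGraph.edgeSet_fromEdgeSet] at this
      exact this.1
    have hxny : x ≠ y := fun h => hnay (h ▸ hax)
    have hgC : s(x, y) ∈ C := ⟨hB0sub hgB0, x, y, rfl, hax, hnay⟩
    have hgne : s(x, y) ≠ s(a, b) := fun h => heB0 (h ▸ hgB0)
    have helt : s(a, b) < s(x, y) :=
      lt_of_le_of_ne (hfe ▸ hfmin _ hgC) (Ne.symm hgne)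
    -- removing s(x,y) from B0 separates a and b
    have hB0sep : ¬(SimpleGraph.fromEdgeSet (B0 \ {s(x, y)})).Reachable a b := by
      intro h
      exact myTree_bridge hB0tree.IsAcyclic
        ((SimpleGraph.fromEdgeSet_adj _).mpr ⟨hgB0, hxny⟩)
        (r1.symm.trans (h.trans r2.symm))
    have heB0' : s(a, b) ∉ B0 \ {s(x, y)} := fun h => heB0 h.1
    have hB0'tree := mySwapTree hB0tree hgB0 hane heB0' hB0sep
    set B0' := insert s(a, b) (B0 \ {s(x, y)}) with hB0'def
    have hB0'span : IsSpanningTree G B0' := by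
      refine ⟨?_, hB0'tree⟩
      intro g hg
      rcases Set.mem_insert_iff.mp hg with rfl | hg
      · exact heG
      · exact hB0sub hg.1
    have hB0'ne : B0' ≠ B0 := fun h => heB0 (h ▸ Set.mem_insert _ _)
    obtain ⟨z, hz1, hz2, hz3⟩ := hB0min B0' hB0'span hB0'ne
    have hzg : z = s(x, y) := by
      by_contra hzx
      exact hz2 (Set.mem_insert_iff.mpr (Or.inr ⟨hz1, hzx⟩))
    have heB0'' : s(a, b) ∈ B0' := Set.mem_insert _ _
    have hne2 : s(a, b) ≠ z := by rw [hzg]; exact fun h => hgne h.symm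
    have := hz3 s(a, b) (Or.inr ⟨heB0'', heB0⟩) hne2
    rw [hzg] at this
    exact absurd helt (not_lt_of_gt this)
  · -- the minimum crossing edge f works
    obtain ⟨hfG, p, q, hfpq, hap, hnaq⟩ := hfC
    have hpnq : p ≠ q := fun h => hnaq (h ▸ hap)
    have hflt : f < s(a, b) := lt_of_le_of_ne (hfmin _ heC) hfe
    have hfnT : f ∉ T := by
      intro hfT'
      have : H.Adj p q := by
        rw [hHdef, SimpleGraph.fromEdgeSet_adj]
        exact ⟨⟨hfpq ▸ hfT', hfpq ▸ hfe⟩, hpnq⟩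
      exact hnaq (hap.trans this.reachable)
    have hfT2 : s(p, q) ∉ T \ {s(a, b)} := fun h => hfnT (hfpq ▸ h.1)
    have hsep : ¬H.Reachable p q := fun h => hnaq (hap.trans h)
    have htree := mySwapTree hTtree heT hpnq hfT2 hsep
    refine ⟨heT, f, hfG, hfnT, hflt, ?_, ?_⟩
    · intro g hg
      rw [hfpq] at hg
      rcases Set.mem_insert_iff.mp hg with rfl | hg
      · exact hfpq ▸ hfG
      · exact hTsub hg.1
    · rw [hfpq]
      exact htree

end Statements
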